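/- For every probability measure μ on ℤ there exists an a.s. finite stopping time τ with respect to the natural filtration (F_n) of the simple symmetric random walk (X_n) such that X_τ has law μ. -/

import Mathlib

open MeasureTheory ProbabilityTheory Filter Set
open scoped ENNReal NNReal Topology

noncomputable section

namespace RWSkorokhod

variable {Ω : Type*} [MeasurableSpace Ω]

/-- The simple symmetric random walk `X n = ξ 1 + ⋯ + ξ n` built from the steps `ξ`. -/
def walk (ξ : ℕ → Ω → ℤ) (n : ℕ) (ω : Ω) : ℤ :=
  ∑ k ∈ Finset.Icc 1 n, ξ k ω

/-- `ξ` is a sequence of i.i.d. symmetric `±1` steps under the probability measure `P`. -/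
structure IsSSRW (P : Measure Ω) (ξ : ℕ → Ω → ℤ) : Prop where
  isProb : IsProbabilityMeasure P
  meas : ∀ k, Measurable (ξ k)
  indep : iIndepFun ξ P
  up : ∀ k, P {ω | ξ k ω = 1} = 1 / 2
  down : ∀ k, P {ω | ξ k ω = -1} = 1 / 2

lemma measurable_walk (ξ : ℕ → Ω → ℤ) (hm : ∀ k, Measurable (ξ k)) (n : ℕ) :
    Measurable (walk ξ n) :=
  Finset.measurable_sum _ fun k _ => hm k

/-- The natural filtration of the random walk: `F n = σ(X 0, …, X n)`. -/
def natFilt (ξ : ℕ → Ω → ℤ) (hm : ∀ k, Measurable (ξ k)) :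
    Filtration ℕ ‹MeasurableSpace Ω› where
  seq n := ⨆ k ∈ Set.Iic n, MeasurableSpace.comap (walk ξ k) inferInstance
  mono' i _ hij := biSup_mono fun k (hk : k ∈ Set.Iic i) => le_trans hk hij
  le' _ := iSup₂_le fun k _ => (measurable_walk ξ hm k).comap_le

/-- `τ` is an (extended-natural-number valued) stopping time for the filtration `F`. -/
def IsStop (F : Filtration ℕ ‹MeasurableSpace Ω›) (τ : Ω → ℕ∞) : Prop :=
  ∀ n : ℕ, MeasurableSet[F n] {ω | τ ω ≤ (n : ℕ∞)}

/-- `τ` is almost surely finite. -/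
def AEFinite (P : Measure Ω) (τ : Ω → ℕ∞) : Prop :=
  ∀ᵐ ω ∂P, τ ω < ⊤

/-- The value `X_τ` of the walk at the stopping time `τ` (junk on `{τ = ∞}`). -/
def stopVal (ξ : ℕ → Ω → ℤ) (τ : Ω → ℕ∞) (ω : Ω) : ℤ :=
  walk ξ (τ ω).toNat ω

/-- The stopped process `X_{n ∧ τ}`, viewed as a real-valued process. -/
def stopProc (ξ : ℕ → Ω → ℤ) (τ : Ω → ℕ∞) (n : ℕ) (ω : Ω) : ℝ :=
  ((walk ξ (min (n : ℕ∞) (τ ω)).toNat ω : ℤ) : ℝ)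

/-- `τ` embeds the measure `μ` : the law of `X_τ` under `P` is `μ`. -/
def Embeds (P : Measure Ω) (ξ : ℕ → Ω → ℤ) (τ : Ω → ℕ∞) (μ : Measure ℤ) : Prop :=
  Measure.map (stopVal ξ τ) P = μ

/-- `τ` is a UI stopping time: an a.s. finite stopping time of the natural filtration such
that the stopped process `(X_{n ∧ τ})` is a uniformly integrable martingale. -/
def IsUIStop (P : Measure Ω) (ξ : ℕ → Ω → ℤ) (hm : ∀ k, Measurable (ξ k))
    (τ : Ω → ℕ∞) : Prop :=
  IsStop (natFilt ξ hm) τ ∧ AEFinite P τ ∧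
    Martingale (stopProc ξ τ) (natFilt ξ hm) P ∧
    UniformIntegrable (stopProc ξ τ) 1 P

/-- The set `M₀^UI` of probability measures on `ℤ` which can be embedded in the random
walk by a UI stopping time of its natural filtration. -/
def MUI (P : Measure Ω) (ξ : ℕ → Ω → ℤ) (hm : ∀ k, Measurable (ξ k)) : Set (Measure ℤ) :=
  {μ | ∃ τ : Ω → ℕ∞, IsUIStop P ξ hm τ ∧ Embeds P ξ τ μ}

/-- A centered probability measure on `ℤ`: finite first moment and mean zero. -/
def Centered (μ : Measure ℤ) : Prop :=
  IsProbabilityMeasure μ ∧ Integrable (fun n : ℤ => (n : ℝ)) μ ∧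
    (∫ n : ℤ, (n : ℝ) ∂μ) = 0

/-- `τ` is a minimal stopping time: any stopping time `σ ≤ τ` a.s. with `X_σ ∼ X_τ`
equals `τ` a.s. -/
def Minimal (P : Measure Ω) (ξ : ℕ → Ω → ℤ) (hm : ∀ k, Measurable (ξ k))
    (τ : Ω → ℕ∞) : Prop :=
  ∀ σ : Ω → ℕ∞, IsStop (natFilt ξ hm) σ → (∀ᵐ ω ∂P, σ ω ≤ τ ω) →
    Measure.map (stopVal ξ σ) P = Measure.map (stopVal ξ τ) P → σ =ᵐ[P] τ

/-- The measure `μ_p = p δ₀ + ((1-p)/2)(δ₋₂ + δ₂)` on `ℤ`. -/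
def muP (p : ℝ) : Measure ℤ :=
  ENNReal.ofReal p • Measure.dirac 0 +
    ENNReal.ofReal ((1 - p) / 2) • (Measure.dirac (-2) + Measure.dirac 2)

/-- The set `S` of `p ∈ [0,1]` such that `μ_p` admits a UI embedding. -/
def Sset (P : Measure Ω) (ξ : ℕ → Ω → ℤ) (hm : ∀ k, Measurable (ξ k)) : Set ℝ :=
  {p | p ∈ Set.Icc (0 : ℝ) 1 ∧ muP p ∈ MUI P ξ hm}

/-- The exit time `H_N = inf {n : X n ∉ [-N, N]}`. -/
def exitTime (ξ : ℕ → Ω → ℤ) (N : ℕ) (ω : Ω) : ℕ∞ :=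
  ⨅ (n : ℕ) (_ : walk ξ n ω ∉ Set.Icc (-(N : ℤ)) (N : ℤ)), (n : ℕ∞)

/-!
The indicators `1{ξ (i + 1) = 1}` are i.i.d. fair bits, so the number `U ∈ [0, 1]` having them
as binary digits is uniformly distributed. Cut `[0, 1]` into disjoint open intervals `I z` of
lengths `μ {z}`; then a.s. `U` lies in exactly one `I z`, this `z` has law `μ`, and it is known at
the finite time `m` when the dyadic interval spanned by the first `m` digits falls inside `I z`.
The walk is a martingale with unit steps, hence a.s. unbounded above and below, so it visits `z`
after time `m`; the first such visit is a stopping time at which the walk equals `z`.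
-/

lemma walk_succ {Ω : Type*} (ξ : ℕ → Ω → ℤ) (n : ℕ) (ω : Ω) :
    walk ξ (n + 1) ω = walk ξ n ω + ξ (n + 1) ω :=
  Finset.sum_Icc_succ_top (by omega) _

section Steps

variable {Ω : Type*} [MeasurableSpace Ω] {P : Measure Ω} {ξ : ℕ → Ω → ℤ}

lemma IsSSRW.ae_step_eq_one_or_neg_one (W : IsSSRW P ξ) :
    ∀ᵐ ω ∂P, ∀ k, ξ k ω = 1 ∨ ξ k ω = -1 := by
  have := W.isProb
  refine ae_all_iff.2 fun k => ?_
  have h1 := W.meas k (measurableSet_singleton 1)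
  have h2 := W.meas k (measurableSet_singleton (-1))
  have hdisj : Disjoint (ξ k ⁻¹' {1}) (ξ k ⁻¹' {-1}) :=
    Set.disjoint_left.2 fun ω hω hω' => by simp_all
  have hunion : P (ξ k ⁻¹' {1} ∪ ξ k ⁻¹' {-1}) = 1 := by
    rw [measure_union hdisj h2]
    exact (congrArg₂ (· + ·) (W.up k) (W.down k)).trans (ENNReal.add_halves 1)
  refine ae_iff.2 ?_
  have hcompl : {ω | ¬(ξ k ω = 1 ∨ ξ k ω = -1)} = (ξ k ⁻¹' {1} ∪ ξ k ⁻¹' {-1})ᶜ := by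
    ext; simp
  rwa [hcompl, prob_compl_eq_zero_iff (h1.union h2)]

lemma measurable_walk_natFilt (hm : ∀ k, Measurable (ξ k)) {k n : ℕ} (hk : k ≤ n) :
    Measurable[natFilt ξ hm n] (walk ξ k) :=
  Measurable.of_comap_le <| le_iSup₂ (f := fun j (_ : j ∈ Iic n) =>
    MeasurableSpace.comap (walk ξ j) inferInstance) k hk

lemma measurable_step_natFilt (hm : ∀ k, Measurable (ξ k)) (k : ℕ) :
    Measurable[natFilt ξ hm (k + 1)] (ξ (k + 1)) := by
  have : ξ (k + 1) = fun ω => walk ξ (k + 1) ω - walk ξ k ω := by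
    funext ω; rw [walk_succ]; ring
  rw [this]
  exact (measurable_walk_natFilt hm le_rfl).sub (measurable_walk_natFilt hm k.le_succ)

lemma natFilt_le_iSup_comap (hm : ∀ k, Measurable (ξ k)) (n : ℕ) :
    natFilt ξ hm n ≤ ⨆ i ∈ Iic n, MeasurableSpace.comap (ξ i) inferInstance := by
  refine iSup₂_le fun k hk => (Finset.measurable_sum _ fun i hi => ?_).comap_le
  exact Measurable.of_comap_le <| le_iSup₂ (f := fun j (_ : j ∈ Iic n) =>
    MeasurableSpace.comap (ξ j) inferInstance) i ((Finset.mem_Icc.1 hi).2.trans hk)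

lemma IsSSRW.indep_step_natFilt (W : IsSSRW P ξ) (n : ℕ) :
    Indep (MeasurableSpace.comap (ξ (n + 1)) inferInstance) (natFilt ξ W.meas n) P := by
  have h := indep_iSup_of_disjoint (fun i => (W.meas i).comap_le) W.indep.iIndep
    (S := {n + 1}) (T := Iic n) (by simp)
  rw [iSup_singleton] at h
  exact indep_of_indep_of_le_right h (natFilt_le_iSup_comap W.meas n)

end Steps

section Recurrence

lemma exists_mem_Icc_eq_of_abs_sub_le_one {g : ℕ → ℤ} (hg : ∀ k, |g (k + 1) - g k| ≤ 1)
    {a b : ℕ} (hab : a ≤ b) {z : ℤ} (hz : g a ≤ z ∧ z ≤ g b ∨ g b ≤ z ∧ z ≤ g a) :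
    ∃ n ∈ Icc a b, g n = z := by
  induction b, hab using Nat.le_induction with
  | base => exact ⟨a, left_mem_Icc.2 le_rfl, by omega⟩
  | succ b hab ih =>
    by_cases h : g a ≤ z ∧ z ≤ g b ∨ g b ≤ z ∧ z ≤ g a
    · obtain ⟨n, hn, hgn⟩ := ih h
      exact ⟨n, Icc_subset_Icc_right b.le_succ hn, hgn⟩
    · have := abs_le.1 (hg b)
      exact ⟨b + 1, right_mem_Icc.2 (hab.trans b.le_succ), by omega⟩

lemma abs_sub_le_of_abs_succ_sub_le_one {g : ℕ → ℤ} (hg : ∀ k, |g (k + 1) - g k| ≤ 1)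
    (n : ℕ) : |g n - g 0| ≤ n := by
  induction n with
  | zero => simp
  | succ n ih =>
    have := abs_le.1 (hg n)
    have := abs_le.1 ih
    rw [abs_le]
    push_cast
    omega

lemma exists_ge_eq_of_not_bddAbove_of_not_bddBelow {g : ℕ → ℤ}
    (hg : ∀ k, |g (k + 1) - g k| ≤ 1) (hup : ¬BddAbove (range g)) (hdown : ¬BddBelow (range g))
    (m : ℕ) (z : ℤ) : ∃ n ≥ m, g n = z := by
  obtain ⟨_, ⟨a, rfl⟩, ha⟩ := not_bddAbove_iff.1 hup (max z (g 0 + m))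
  obtain ⟨_, ⟨b, rfl⟩, hb⟩ := not_bddBelow_iff.1 hdown (min z (g 0 - m))
  have ha' := abs_le.1 (abs_sub_le_of_abs_succ_sub_le_one hg a)
  have hb' := abs_le.1 (abs_sub_le_of_abs_succ_sub_le_one hg b)
  rcases le_total a b with hab | hab
  · obtain ⟨n, ⟨han, -⟩, hgn⟩ := exists_mem_Icc_eq_of_abs_sub_le_one hg hab (z := z) (by omega)
    exact ⟨n, by omega, hgn⟩
  · obtain ⟨n, ⟨hbn, -⟩, hgn⟩ := exists_mem_Icc_eq_of_abs_sub_le_one hg hab (z := z) (by omega)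
    exact ⟨n, by omega, hgn⟩

variable {Ω : Type*} [MeasurableSpace Ω] {P : Measure Ω} {ξ : ℕ → Ω → ℤ}

lemma IsSSRW.ae_abs_step_le_one (W : IsSSRW P ξ) : ∀ᵐ ω ∂P, ∀ k, |(ξ k ω : ℝ)| ≤ 1 := by
  filter_upwards [W.ae_step_eq_one_or_neg_one] with ω hω k
  rcases hω k with h | h <;> simp [h]

lemma IsSSRW.integrable_step (W : IsSSRW P ξ) (k : ℕ) :
    Integrable (fun ω => (ξ k ω : ℝ)) P := by
  have := W.isProb
  refine Integrable.of_bound (C := 1)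
    (Measurable.of_discrete.comp (W.meas k)).aestronglyMeasurable ?_
  filter_upwards [W.ae_abs_step_le_one] with ω hω using hω k

lemma IsSSRW.integral_step (W : IsSSRW P ξ) (k : ℕ) : ∫ ω, (ξ k ω : ℝ) ∂P = 0 := by
  have := W.isProb
  have hup := W.meas k (measurableSet_singleton 1)
  have hdown := W.meas k (measurableSet_singleton (-1))
  have hae : (fun ω => (ξ k ω : ℝ)) =ᵐ[P]
      fun ω => (ξ k ⁻¹' {1}).indicator 1 ω - (ξ k ⁻¹' {-1}).indicator 1 ω := by
    filter_upwards [W.ae_step_eq_one_or_neg_one] with ω hω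
    rcases hω k with h | h <;> simp [indicator, h]
  rw [integral_congr_ae hae, integral_sub ((integrable_const 1).indicator hup)
    ((integrable_const 1).indicator hdown), integral_indicator_one hup,
    integral_indicator_one hdown, measureReal_def, measureReal_def]
  simp only [preimage, mem_singleton_iff, W.up, W.down, sub_self]

lemma IsSSRW.martingale_walk (W : IsSSRW P ξ) :
    Martingale (fun n ω => (walk ξ n ω : ℝ)) (natFilt ξ W.meas) P := by
  have := W.isProb
  have hadapted : StronglyAdapted (natFilt ξ W.meas) fun n ω => (walk ξ n ω : ℝ) := fun n =>
    (Measurable.of_discrete.comp (measurable_walk_natFilt W.meas le_rfl)).stronglyMeasurable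
  have hint (n : ℕ) : Integrable (fun ω => (walk ξ n ω : ℝ)) P := by
    simpa only [walk, Int.cast_sum] using integrable_finsetSum _ fun k _ => W.integrable_step k
  refine martingale_nat hadapted hint fun n => ?_
  have hsucc : (fun ω => (walk ξ (n + 1) ω : ℝ)) =
      (fun ω => (walk ξ n ω : ℝ)) + fun ω => (ξ (n + 1) ω : ℝ) := by
    funext ω; simp [walk_succ]
  have hstep : P[fun ω => (ξ (n + 1) ω : ℝ) | natFilt ξ W.meas n] =ᵐ[P] 0 := by
    have hmeas : Measurable[MeasurableSpace.comap (ξ (n + 1)) inferInstance] (ξ (n + 1)) :=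
      Measurable.of_comap_le le_rfl
    have := condExp_indep_eq (W.meas (n + 1)).comap_le ((natFilt ξ W.meas).le n)
      ((Measurable.of_discrete (f := ((↑) : ℤ → ℝ))).comp hmeas).stronglyMeasurable
      (W.indep_step_natFilt n)
    exact this.trans (EventuallyEq.of_eq (funext fun _ => W.integral_step (n + 1)))
  rw [hsucc]
  filter_upwards [condExp_add (hint n) (W.integrable_step (n + 1)) (natFilt ξ W.meas n),
    hstep] with ω h1 h2
  rw [h1, Pi.add_apply, condExp_of_stronglyMeasurable _ (hadapted n) (hint n), h2]
  simp

lemma IsSSRW.ae_exists_ge_walk_eq (W : IsSSRW P ξ) :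
    ∀ᵐ ω ∂P, ∀ (m : ℕ) (z : ℤ), ∃ n ≥ m, walk ξ n ω = z := by
  -- A martingale with bounded increments converges exactly where it is bounded above, and is
  -- bounded above exactly where it is bounded below; unit steps rule out convergence.
  have := W.isProb
  have hbdd : ∀ᵐ ω ∂P, ∀ k, |(walk ξ (k + 1) ω : ℝ) - walk ξ k ω| ≤ ((1 : ℝ≥0) : ℝ) := by
    filter_upwards [W.ae_abs_step_le_one] with ω hω k
    simpa [walk_succ] using hω (k + 1)
  filter_upwards [W.martingale_walk.submartingale.bddAbove_iff_exists_tendsto hbdd,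
    W.martingale_walk.bddAbove_range_iff_bddBelow_range hbdd, W.ae_step_eq_one_or_neg_one]
    with ω hconv hsymm hstep
  have hsteps : ∀ k, |walk ξ (k + 1) ω - walk ξ k ω| ≤ 1 := fun k => by
    rcases hstep (k + 1) with h | h <;> simp [walk_succ, h]
  have hdiverge : ¬∃ c, Tendsto (fun n => (walk ξ n ω : ℝ)) atTop (𝓝 c) := by
    rintro ⟨c, hc⟩
    obtain ⟨N, hN⟩ := Metric.cauchySeq_iff'.1 hc.cauchySeq 1 one_pos
    have := hN (N + 1) N.le_succ
    rw [Real.dist_eq, walk_succ] at this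
    rcases hstep (N + 1) with h | h <;> simp [h] at this
  have hup : ¬BddAbove (range fun n => (walk ξ n ω : ℝ)) := fun h => hdiverge (hconv.1 h)
  have hdown : ¬BddBelow (range fun n => (walk ξ n ω : ℝ)) := fun h => hup (hsymm.2 h)
  refine exists_ge_eq_of_not_bddAbove_of_not_bddBelow hsteps (fun h => hup ?_)
    (fun h => hdown ?_)
  · have := (Int.cast_mono (R := ℝ)).map_bddAbove h
    rw [← range_comp] at this
    exact this
  · have := (Int.cast_mono (R := ℝ)).map_bddBelow h
    rw [← range_comp] at this
    exact this

end Recurrence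

section BinaryExpansion

def binaryPrefix (a : ℕ → Fin 2) : ℕ → ℕ
  | 0 => 0
  | n + 1 => 2 * binaryPrefix a n + a n

lemma binaryPrefix_lt (a : ℕ → Fin 2) (n : ℕ) : binaryPrefix a n < 2 ^ n := by
  induction n with
  | zero => simp [binaryPrefix]
  | succ n ih =>
    have := (a n).isLt
    rw [binaryPrefix, pow_succ]
    omega

lemma sum_range_ofDigitsTerm_eq_binaryPrefix (a : ℕ → Fin 2) (n : ℕ) :
    ∑ i ∈ Finset.range n, Real.ofDigitsTerm a i = binaryPrefix a n / 2 ^ n := by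
  induction n with
  | zero => simp [binaryPrefix]
  | succ n ih =>
    rw [Finset.sum_range_succ, ih, binaryPrefix, Real.ofDigitsTerm]
    push_cast
    field_simp
    ring

lemma ofDigits_mem_Icc_binaryPrefix (a : ℕ → Fin 2) (n : ℕ) :
    Real.ofDigits a ∈ Icc ((binaryPrefix a n : ℝ) / 2 ^ n) ((binaryPrefix a n + 1) / 2 ^ n) := by
  have htail := Real.ofDigits_eq_sum_add_ofDigits a n
  have h0 := Real.ofDigits_nonneg fun i => a (i + n)
  have h1 := Real.ofDigits_le_one fun i => a (i + n)
  rw [sum_range_ofDigitsTerm_eq_binaryPrefix] at htail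
  push_cast at htail
  have hpos : (0 : ℝ) < (2 ^ n)⁻¹ := by positivity
  constructor
  · rw [htail]; nlinarith
  · rw [htail, add_div, one_div]; nlinarith

lemma ofDigits_mem_Ioo_iff (a : ℕ → Fin 2) (x y : ℝ) :
    Real.ofDigits a ∈ Ioo x y ↔
      ∃ n, x < (binaryPrefix a n : ℝ) / 2 ^ n ∧ ((binaryPrefix a n : ℝ) + 1) / 2 ^ n < y := by
  constructor
  · rintro ⟨hx, hy⟩
    obtain ⟨n, hn⟩ := exists_pow_lt_of_lt_one (lt_min (sub_pos.2 hx) (sub_pos.2 hy))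
      (by norm_num : (2⁻¹ : ℝ) < 1)
    obtain ⟨hlow, hhigh⟩ := ofDigits_mem_Icc_binaryPrefix a n
    rw [inv_pow] at hn
    rw [add_div, one_div] at hhigh
    have := min_le_left (Real.ofDigits a - x) (y - Real.ofDigits a)
    have := min_le_right (Real.ofDigits a - x) (y - Real.ofDigits a)
    exact ⟨n, by linarith, by rw [add_div, one_div]; linarith⟩
  · rintro ⟨n, hx, hy⟩
    have h := ofDigits_mem_Icc_binaryPrefix a n
    exact ⟨hx.trans_le h.1, h.2.trans_lt hy⟩

variable {Ω : Type*} {d : ℕ → Ω → Fin 2}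

def prefixWithin (d : ℕ → Ω → Fin 2) (n : ℕ) (x y : ℝ) : Set Ω :=
  {ω | x < (binaryPrefix (d · ω) n : ℝ) / 2 ^ n ∧ ((binaryPrefix (d · ω) n : ℝ) + 1) / 2 ^ n < y}

lemma iUnion_prefixWithin (d : ℕ → Ω → Fin 2) (x y : ℝ) :
    ⋃ n, prefixWithin d n x y = (fun ω => Real.ofDigits (d · ω)) ⁻¹' Ioo x y := by
  ext ω
  simp only [prefixWithin, mem_iUnion, mem_ofPred_eq, mem_preimage]
  exact (ofDigits_mem_Ioo_iff _ _ _).symm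

lemma measurable_binaryPrefix {m : MeasurableSpace Ω} {n : ℕ}
    (hd : ∀ i < n, Measurable[m] (d i)) : Measurable[m] fun ω => binaryPrefix (d · ω) n := by
  induction n with
  | zero => exact measurable_const
  | succ n ih =>
    have hn := hd n n.lt_succ_self
    have := ih fun i hi => hd i (hi.trans n.lt_succ_self)
    simp only [binaryPrefix]
    fun_prop

lemma measurableSet_prefixWithin {m : MeasurableSpace Ω} {n : ℕ}
    (hd : ∀ i < n, Measurable[m] (d i)) (x y : ℝ) : MeasurableSet[m] (prefixWithin d n x y) := by
  have hprefix : Measurable[m] fun ω => (binaryPrefix (d · ω) n : ℝ) :=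
    (Measurable.of_discrete (f := ((↑) : ℕ → ℝ))).comp (measurable_binaryPrefix hd)
  exact (measurableSet_lt measurable_const (hprefix.div_const _)).inter
    (measurableSet_lt ((hprefix.add_const 1).div_const _) measurable_const)

end BinaryExpansion

section FairBits

variable {Ω : Type*} [MeasurableSpace Ω] {P : Measure Ω} [IsProbabilityMeasure P]
  {d : ℕ → Ω → Fin 2}

lemma measure_binaryPrefix_eq (hd : ∀ i, Measurable (d i)) (hind : iIndepFun d P)
    (hfair : ∀ i e, P {ω | d i ω = e} = 2⁻¹) {n j : ℕ} (hj : j < 2 ^ n) :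
    P ((fun ω => binaryPrefix (d · ω) n) ⁻¹' {j}) = 2⁻¹ ^ n := by
  induction n generalizing j with
  | zero => simp [binaryPrefix, show j = 0 by simpa using hj]
  | succ n ih =>
    let e : Fin 2 := ⟨j % 2, j.mod_lt two_pos⟩
    have hsplit : (fun ω => binaryPrefix (d · ω) (n + 1)) ⁻¹' {j} =
        (fun ω => binaryPrefix (d · ω) n) ⁻¹' {j / 2} ∩ {ω | d n ω = e} := by
      ext ω
      have := (d n ω).isLt
      simp only [binaryPrefix, mem_preimage, mem_singleton_iff, mem_ofPred_eq, mem_inter_iff, e,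
        Fin.ext_iff]
      omega
    have hindep := indep_iSup_of_disjoint (fun i => (hd i).comap_le) hind.iIndep
      (S := Iio n) (T := {n}) (by simp)
    rw [iSup_singleton] at hindep
    have hprefix : MeasurableSet[⨆ i ∈ Iio n, MeasurableSpace.comap (d i) inferInstance]
        ((fun ω => binaryPrefix (d · ω) n) ⁻¹' {j / 2}) :=
      measurable_binaryPrefix (fun i hi => Measurable.of_comap_le <|
        le_iSup₂ (f := fun i (_ : i ∈ Iio n) => MeasurableSpace.comap (d i) inferInstance) i hi)
        (measurableSet_singleton _)
    have hdigit : MeasurableSet[MeasurableSpace.comap (d n) inferInstance] {ω | d n ω = e} :=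
      ⟨{e}, measurableSet_singleton e, rfl⟩
    rw [hsplit, (Indep_iff _ _ P).1 hindep _ _ hprefix hdigit, hfair,
      ih (by rw [pow_succ] at hj; omega), pow_succ]

lemma measure_binaryPrefix_lt (hd : ∀ i, Measurable (d i)) (hind : iIndepFun d P)
    (hfair : ∀ i e, P {ω | d i ω = e} = 2⁻¹) {n : ℕ} {x : ℝ} (hx : x ≤ 2 ^ n) :
    P {ω | (binaryPrefix (d · ω) n : ℝ) < x} = ⌈x⌉₊ * 2⁻¹ ^ n := by
  have hset : {ω | (binaryPrefix (d · ω) n : ℝ) < x} =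
      ⋃ j ∈ Finset.range ⌈x⌉₊, (fun ω => binaryPrefix (d · ω) n) ⁻¹' {j} := by
    ext ω; simp [Nat.lt_ceil]
  have hceil : ⌈x⌉₊ ≤ 2 ^ n := Nat.ceil_le.2 (by exact_mod_cast hx)
  rw [hset, measure_biUnion_finset (fun i _ j _ hij => Set.disjoint_left.2 fun ω hi hj => hij
      (hi.symm.trans hj)) fun j _ => measurable_binaryPrefix (fun i _ => hd i)
      (measurableSet_singleton j),
    Finset.sum_congr rfl fun j hj => measure_binaryPrefix_eq hd hind hfair
      ((Finset.mem_range.1 hj).trans_le hceil)]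
  simp

lemma measure_ofDigits_lt (hd : ∀ i, Measurable (d i)) (hind : iIndepFun d P)
    (hfair : ∀ i e, P {ω | d i ω = e} = 2⁻¹) {t : ℝ} (ht0 : 0 ≤ t) (ht1 : t ≤ 1) :
    P {ω | Real.ofDigits (d · ω) < t} = ENNReal.ofReal t := by
  set S := {ω | Real.ofDigits (d · ω) < t}
  have hbound (n : ℕ) : |(P S).toReal - t| ≤ (2 ^ n)⁻¹ := by
    have h2n : (0 : ℝ) < 2 ^ n := by positivity
    have hupper : P S ≤ ⌈t * 2 ^ n⌉₊ * 2⁻¹ ^ n := by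
      rw [← measure_binaryPrefix_lt hd hind hfair (by nlinarith)]
      refine measure_mono fun ω hω => ?_
      have := (ofDigits_mem_Icc_binaryPrefix (d · ω) n).1
      rw [div_le_iff₀ h2n] at this
      simp only [S, mem_ofPred_eq] at hω ⊢
      nlinarith
    have hlower : ⌈t * 2 ^ n - 1⌉₊ * 2⁻¹ ^ n ≤ P S := by
      rw [← measure_binaryPrefix_lt hd hind hfair (by nlinarith)]
      refine measure_mono fun ω hω => ?_
      have := (ofDigits_mem_Icc_binaryPrefix (d · ω) n).2
      rw [le_div_iff₀ h2n] at this
      simp only [S, mem_ofPred_eq] at hω ⊢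
      nlinarith
    have hu := ENNReal.toReal_mono (by finiteness) hupper
    have hl := ENNReal.toReal_mono (measure_ne_top P S) hlower
    simp only [ENNReal.toReal_mul, ENNReal.toReal_natCast, ENNReal.toReal_pow, ENNReal.toReal_inv,
      ENNReal.toReal_ofNat, inv_pow] at hu hl
    have hceil_up := Nat.ceil_lt_add_one (by positivity : 0 ≤ t * 2 ^ n)
    have hceil_low := Nat.le_ceil (t * 2 ^ n - 1)
    have hinv : 2 ^ n * (2 ^ n : ℝ)⁻¹ = 1 := mul_inv_cancel₀ h2n.ne'
    rw [abs_le]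
    constructor <;> nlinarith [inv_pos.2 h2n]
  have hp : (P S).toReal = t := eq_of_forall_dist_le fun ε hε => by
    obtain ⟨n, hn⟩ := exists_pow_lt_of_lt_one hε (by norm_num : (2⁻¹ : ℝ) < 1)
    rw [inv_pow] at hn
    exact (Real.dist_eq _ _ ▸ hbound n).trans hn.le
  rw [← hp, ENNReal.ofReal_toReal (measure_ne_top P S)]

lemma isUniform_ofDigits (hd : ∀ i, Measurable (d i)) (hind : iIndepFun d P)
    (hfair : ∀ i e, P {ω | d i ω = e} = 2⁻¹) :
    pdf.IsUniform (fun ω => Real.ofDigits (d · ω)) (Icc 0 1) P := by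
  have hU : Measurable fun ω => Real.ofDigits (d · ω) :=
    Real.continuous_ofDigits.measurable.comp (measurable_pi_lambda _ hd)
  refine Measure.ext_of_Ici _ _ fun a => ?_
  rw [Measure.map_apply hU measurableSet_Ici, cond_apply' measurableSet_Ici, Real.volume_Icc,
    sub_zero, ENNReal.ofReal_one, inv_one, one_mul]
  rcases le_or_gt a 0 with ha0 | ha0
  · rw [inter_eq_left.2 (Icc_subset_Ici_self.trans (Ici_subset_Ici.2 ha0)), Real.volume_Icc,
      sub_zero, ENNReal.ofReal_one, ← measure_univ (μ := P)]
    congr 1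
    exact eq_univ_of_forall fun ω => ha0.trans (Real.ofDigits_nonneg _)
  rcases le_or_gt a 1 with ha1 | ha1
  · have hcompl : (fun ω => Real.ofDigits (d · ω)) ⁻¹' Ici a =
        {ω | Real.ofDigits (d · ω) < a}ᶜ := by
      ext; simp
    rw [hcompl, prob_compl_eq_one_sub (measurableSet_lt hU measurable_const),
      measure_ofDigits_lt hd hind hfair ha0.le ha1,
      show Icc (0 : ℝ) 1 ∩ Ici a = Icc a 1 by ext; simp; grind, Real.volume_Icc,
      ENNReal.ofReal_sub _ ha0.le, ENNReal.ofReal_one]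
  · rw [show Icc (0 : ℝ) 1 ∩ Ici a = ∅ by ext; simp; grind, measure_empty]
    refine measure_mono_null (fun ω hω => ?_) measure_empty
    exact absurd ((Real.ofDigits_le_one _).trans_lt ha1) (not_lt.2 hω)

end FairBits

section StepDigits

variable {Ω : Type*} [MeasurableSpace Ω] {P : Measure Ω} {ξ : ℕ → Ω → ℤ}

def stepDigit (ξ : ℕ → Ω → ℤ) (i : ℕ) (ω : Ω) : Fin 2 :=
  if ξ (i + 1) ω = 1 then 1 else 0

lemma measurable_stepDigit_natFilt (hm : ∀ k, Measurable (ξ k)) (i : ℕ) :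
    Measurable[natFilt ξ hm (i + 1)] (stepDigit ξ i) :=
  (Measurable.of_discrete (f := fun z : ℤ => if z = 1 then (1 : Fin 2) else 0)).comp
    (measurable_step_natFilt hm i)

lemma IsSSRW.iIndepFun_stepDigit (W : IsSSRW P ξ) : iIndepFun (stepDigit ξ) P :=
  iIndepFun.precomp (g := fun i => i + 1) (add_left_injective 1)
    (W.indep.comp (fun _ z => if z = 1 then (1 : Fin 2) else 0) fun _ => Measurable.of_discrete)

lemma IsSSRW.measure_stepDigit_eq (W : IsSSRW P ξ) (i : ℕ) (e : Fin 2) :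
    P {ω | stepDigit ξ i ω = e} = 2⁻¹ := by
  have := W.isProb
  have hone : {ω | stepDigit ξ i ω = 1} = {ω | ξ (i + 1) ω = 1} := by
    ext ω; by_cases h : ξ (i + 1) ω = 1 <;> simp [stepDigit, h]
  fin_cases e
  · have hzero : {ω | stepDigit ξ i ω = 0} = {ω | ξ (i + 1) ω = 1}ᶜ := by
      ext ω; by_cases h : ξ (i + 1) ω = 1 <;> simp [stepDigit, h]
    rw [Fin.zero_eta, hzero, prob_compl_eq_one_sub (s := {ω | ξ (i + 1) ω = 1})
      (W.meas _ (measurableSet_singleton 1)),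
      W.up, one_div, ENNReal.one_sub_inv_two]
  · rw [Fin.mk_one, hone, W.up, one_div]

end StepDigits

lemma exists_pairwise_disjoint_Ioo_volume_eq {ι : Type*} [Countable ι] [MeasurableSpace ι]
    [MeasurableSingletonClass ι] (μ : Measure ι) [IsProbabilityMeasure μ] :
    ∃ a b : ι → ℝ, Pairwise (fun i j => Disjoint (Ioo (a i) (b i)) (Ioo (a j) (b j))) ∧
      (∀ i, Ioo (a i) (b i) ⊆ Icc 0 1) ∧ ∀ i, volume (Ioo (a i) (b i)) = μ {i} := by
  obtain ⟨f, hf⟩ := Countable.exists_injective_nat ι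
  refine ⟨fun i => μ.real {j | f j < f i}, fun i => μ.real {j | f j ≤ f i}, ?_, ?_, ?_⟩
  · have hle {i j : ι} (h : f i < f j) : μ.real {k | f k ≤ f i} ≤ μ.real {k | f k < f j} :=
      measureReal_mono fun k (hk : f k ≤ f i) => hk.trans_lt h
    intro i j hij
    refine Set.disjoint_left.2 fun x hi hj => ?_
    rcases (hf.ne hij).lt_or_gt with h | h
    · exact (hi.2.trans_le (hle h)).not_gt hj.1
    · exact (hj.2.trans_le (hle h)).not_gt hi.1
  · exact fun i x hx => ⟨measureReal_nonneg.trans hx.1.le, hx.2.le.trans measureReal_le_one⟩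
  · intro i
    have hsplit : {j | f j ≤ f i} = {j | f j < f i} ∪ {i} := by
      ext j; simp [le_iff_lt_or_eq, hf.eq_iff, or_comm]
    rw [Real.volume_Ioo]
    dsimp only
    rw [hsplit, measureReal_union (by simp) (measurableSet_singleton i),
      add_sub_cancel_left, ofReal_measureReal]

section StoppingTimes

variable {Ω : Type*} {E : ℕ → Set Ω} {ω : Ω}

def firstEntry (E : ℕ → Set Ω) (ω : Ω) : ℕ∞ :=
  ⨅ (n : ℕ) (_ : ω ∈ E n), (n : ℕ∞)

lemma firstEntry_le_iff {n : ℕ} : firstEntry E ω ≤ n ↔ ∃ k ≤ n, ω ∈ E k := by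
  refine ⟨fun h => ?_, fun ⟨k, hk, hkE⟩ => (iInf₂_le k hkE).trans (by exact_mod_cast hk)⟩
  by_contra! hnot
  have : ((n + 1 : ℕ) : ℕ∞) ≤ firstEntry E ω :=
    le_iInf₂ fun k hkE => by exact_mod_cast not_le.1 fun hk => hnot k hk hkE
  exact absurd (this.trans h) (by norm_cast; omega)

lemma firstEntry_lt_top {n : ℕ} (h : ω ∈ E n) : firstEntry E ω < ⊤ :=
  (iInf₂_le n h).trans_lt (ENat.natCast_lt_top n)

lemma mem_firstEntry_toNat (h : firstEntry E ω < ⊤) : ω ∈ E (firstEntry E ω).toNat := by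
  have hex : {n | ω ∈ E n}.Nonempty := by
    obtain ⟨n, hn⟩ := iInf_lt_iff.1 h
    obtain ⟨hnE, -⟩ := iInf_lt_iff.1 hn
    exact ⟨n, hnE⟩
  have : firstEntry E ω = (sInf {n | ω ∈ E n} : ℕ) := (ENat.natCast_sInf hex).symm
  rw [this, ENat.toNat_natCast]
  exact Nat.sInf_mem hex

lemma isStop_firstEntry [MeasurableSpace Ω] {F : Filtration ℕ ‹MeasurableSpace Ω›}
    (hE : ∀ n, MeasurableSet[F n] (E n)) : IsStop F (firstEntry E) := fun n => by
  have : {ω | firstEntry E ω ≤ n} = ⋃ k ∈ Iic n, E k := by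
    ext ω; simp [firstEntry_le_iff]
  rw [this]
  exact MeasurableSet.biUnion (to_countable _) fun k hk => F.mono hk _ (hE k)

lemma IsStop.measurable [MeasurableSpace Ω] {F : Filtration ℕ ‹MeasurableSpace Ω›}
    {τ : Ω → ℕ∞} (hτ : IsStop F τ) : Measurable τ := by
  refine measurable_to_countable' fun x => ?_
  induction x using ENat.recTopCoe with
  | top =>
    have : τ ⁻¹' {⊤} = (⋃ n : ℕ, {ω | τ ω ≤ n})ᶜ := by
      ext ω; simp [ENat.eq_top_iff_forall_gt]
    rw [this]
    exact (MeasurableSet.iUnion fun n => F.le n _ (hτ n)).compl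
  | coe n => exact F.le n _ (IsStoppingTime.measurableSet_eq hτ n)

lemma measurable_stopVal [MeasurableSpace Ω] {ξ : ℕ → Ω → ℤ}
    (hm : ∀ k, Measurable (ξ k)) {F : Filtration ℕ ‹MeasurableSpace Ω›} {τ : Ω → ℕ∞}
    (hτ : IsStop F τ) : Measurable (stopVal ξ τ) := by
  have hwalk : Measurable fun p : Ω × ℕ => walk ξ p.2 p.1 :=
    measurable_from_prod_countable_left fun n => measurable_walk ξ hm n
  exact hwalk.comp (measurable_id.prodMk
    ((Measurable.of_discrete (f := ENat.toNat)).comp hτ.measurable))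

end StoppingTimes

section Embedding

variable {Ω : Type*} [MeasurableSpace Ω] {P : Measure Ω} {ξ : ℕ → Ω → ℤ}

lemma IsSSRW.exists_isStop_stopVal_eq (W : IsSSRW P ξ) (A : ℕ → ℤ → Set Ω)
    (hA : ∀ m z, MeasurableSet[natFilt ξ W.meas m] (A m z))
    (hdisj : ∀ m m' z z', z ≠ z' → Disjoint (A m z) (A m' z'))
    (hcover : ∀ᵐ ω ∂P, ∃ m z, ω ∈ A m z) :
    ∃ τ, IsStop (natFilt ξ W.meas) τ ∧ AEFinite P τ ∧
      ∀ ω m z, ω ∈ A m z → τ ω < ⊤ → stopVal ξ τ ω = z := by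
  set E : ℕ → Set Ω := fun n => {ω | ∃ m ≤ n, ω ∈ A m (walk ξ n ω)}
  have hE (n : ℕ) : MeasurableSet[natFilt ξ W.meas n] (E n) := by
    have : E n = ⋃ m ∈ Iic n, ⋃ z, A m z ∩ walk ξ n ⁻¹' {z} := by
      ext ω; simp [E]
    rw [this]
    refine MeasurableSet.biUnion (to_countable _) fun m hm => MeasurableSet.iUnion fun z => ?_
    exact ((natFilt ξ W.meas).mono hm _ (hA m z)).inter
      (measurable_walk_natFilt W.meas le_rfl (measurableSet_singleton z))
  refine ⟨firstEntry E, isStop_firstEntry hE, ?_, fun ω m z hmz hfin => ?_⟩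
  · filter_upwards [hcover, W.ae_exists_ge_walk_eq] with ω ⟨m, z, hmz⟩ hrec
    obtain ⟨n, hmn, hnz⟩ := hrec m z
    exact firstEntry_lt_top ⟨m, hmn, hnz ▸ hmz⟩
  · obtain ⟨m', -, hm'⟩ := mem_firstEntry_toNat hfin
    by_contra hne
    exact Set.disjoint_left.1 (hdisj m' m _ z hne) hm' hmz

theorem IsSSRW.exists_embeds (W : IsSSRW P ξ) (μ : Measure ℤ) [IsProbabilityMeasure μ]
    (A : ℕ → ℤ → Set Ω) (hA : ∀ m z, MeasurableSet[natFilt ξ W.meas m] (A m z))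
    (hdisj : ∀ m m' z z', z ≠ z' → Disjoint (A m z) (A m' z'))
    (hlaw : ∀ z, P (⋃ m, A m z) = μ {z}) :
    ∃ τ, IsStop (natFilt ξ W.meas) τ ∧ AEFinite P τ ∧ Embeds P ξ τ μ := by
  have := W.isProb
  have hmeas (z : ℤ) : MeasurableSet (⋃ m, A m z) :=
    MeasurableSet.iUnion fun m => (natFilt ξ W.meas).le m _ (hA m z)
  have hcover : ∀ᵐ ω ∂P, ∃ m z, ω ∈ A m z := by
    have hfull : P (⋃ z, ⋃ m, A m z) = 1 := by
      rw [measure_iUnion (fun z z' hzz' => Set.disjoint_iUnion_left.2 fun m =>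
        Set.disjoint_iUnion_right.2 fun m' => hdisj m m' z z' hzz') hmeas]
      simp_rw [hlaw]
      simpa using Measure.tsum_indicator_apply_singleton μ univ MeasurableSet.univ
    filter_upwards [measure_eq_zero_iff_ae_notMem.1
      ((prob_compl_eq_zero_iff (MeasurableSet.iUnion hmeas)).2 hfull)] with ω hω
    simpa [exists_comm (α := ℕ)] using hω
  obtain ⟨τ, hτ, hfin, hval⟩ := W.exists_isStop_stopVal_eq A hA hdisj hcover
  refine ⟨τ, hτ, hfin, Measure.ext_of_singleton fun z => ?_⟩
  rw [Measure.map_apply (measurable_stopVal W.meas hτ) (measurableSet_singleton z), ← hlaw z]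
  refine measure_congr ?_
  filter_upwards [hfin, hcover] with ω hωfin ⟨m, z', hz'⟩
  have hval' := hval ω m z' hz' hωfin
  refine propext ⟨fun (h : stopVal ξ τ ω = z) => mem_iUnion.2 ⟨m, hval'.symm.trans h ▸ hz'⟩,
    fun h => ?_⟩
  obtain ⟨m', hm'⟩ := mem_iUnion.1 h
  show stopVal ξ τ ω = z
  by_contra hne
  exact Set.disjoint_left.1 (hdisj m m' z' z (hval' ▸ hne)) hz' hm'

end Embedding

/-- For every probability measure `μ` on `ℤ` there is an a.s. finite
stopping time `τ` of the natural filtration of the simple symmetric random walk with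
`X_τ ∼ μ`. -/
theorem skorokhod_embedding_exists
    {Ω : Type*} [MeasurableSpace Ω] (P : Measure Ω) (ξ : ℕ → Ω → ℤ)
    (W : IsSSRW P ξ) (μ : Measure ℤ) (hμ : IsProbabilityMeasure μ) :
    ∃ τ : Ω → ℕ∞, IsStop (natFilt ξ W.meas) τ ∧ AEFinite P τ ∧ Embeds P ξ τ μ := by
  have := W.isProb
  obtain ⟨a, b, hdisj, hsub, hvol⟩ := exists_pairwise_disjoint_Ioo_volume_eq μ
  have hd (i : ℕ) : Measurable (stepDigit ξ i) :=
    (measurable_stepDigit_natFilt W.meas i).mono ((natFilt ξ W.meas).le _) le_rfl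
  have hU := isUniform_ofDigits hd W.iIndepFun_stepDigit W.measure_stepDigit_eq
  refine W.exists_embeds μ (fun m z => prefixWithin (stepDigit ξ) m (a z) (b z))
    (fun m z => ?_) (fun m m' z z' hzz' => ?_) fun z => ?_
  · exact measurableSet_prefixWithin (fun i hi =>
      (measurable_stepDigit_natFilt W.meas i).mono ((natFilt ξ W.meas).mono hi) le_rfl) _ _
  · refine ((hdisj hzz').preimage fun ω => Real.ofDigits (stepDigit ξ · ω)).mono ?_ ?_ <;>
      rw [← iUnion_prefixWithin]
    · exact subset_iUnion (prefixWithin (stepDigit ξ) · (a z) (b z)) m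
    · exact subset_iUnion (prefixWithin (stepDigit ξ) · (a z') (b z')) m'
  · rw [iUnion_prefixWithin, hU.measure_preimage (by simp) (by simp) measurableSet_Ioo,
      inter_eq_right.2 (hsub z), hvol z, Real.volume_Icc]
    simp

end RWSkorokhod
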